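/- arXiv:2408.07534 — 4 statements merged into one kernel-verified Lean document; each statement's English description precedes it below -/
import Mathlib

section
/- If φ and ψ are in Φ_ex, then their pointwise product φψ is in Φ_ex with γ_{φψ} ≤ 2·γ_φ·γ_ψ. -/
open Set Filter

/-- `Φ`: convex, strictly increasing bijections of `[0,∞)` (with `φ 0 = 0`). -/
def Phi (φ : ℝ → ℝ) : Prop :=
  ConvexOn ℝ (Ici 0) φ ∧ StrictMonoOn φ (Ici 0) ∧
    Set.BijOn φ (Ici 0) (Ici 0) ∧ φ 0 = 0

/-- `γ_φ = sup_{x ≥ 0} φ(1+x)/(φ(1)+φ(x))`, valued in `[0,∞]`. -/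
noncomputable def gam (φ : ℝ → ℝ) : ENNReal :=
  ⨆ x : Ici (0:ℝ), ENNReal.ofReal (φ (1 + x) / (φ 1 + φ x))

lemma phi_nonneg {φ : ℝ → ℝ} (hφ : Phi φ) : ∀ x ∈ Ici (0:ℝ), 0 ≤ φ x :=
  fun x hx => hφ.2.2.1.mapsTo hx

lemma phi_continuousOn {φ : ℝ → ℝ} (hφ : Phi φ) : ContinuousOn φ (Ici (0:ℝ)) := by
  rw [continuousOn_iff_continuous_restrict]
  set F : Ici (0:ℝ) → Ici (0:ℝ) := fun x => ⟨φ x, hφ.2.2.1.mapsTo x.2⟩ with hF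
  have hmono : StrictMono F := fun a b hab => by
    exact hφ.2.1 a.2 b.2 hab
  have hsurj : Function.Surjective F := by
    intro y
    obtain ⟨x, hx, hxy⟩ := hφ.2.2.1.surjOn y.2
    exact ⟨⟨x, hx⟩, Subtype.ext hxy⟩
  have : Continuous F := (StrictMono.orderIsoOfSurjective F hmono hsurj).continuous
  exact continuous_subtype_val.comp this

lemma phi_one_pos {φ : ℝ → ℝ} (hφ : Phi φ) : 0 < φ 1 := by
  have := hφ.2.1 (self_mem_Ici) (by norm_num : (1:ℝ) ∈ Ici 0) one_pos
  rwa [hφ.2.2.2] at this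

lemma gam_key {φ : ℝ → ℝ} (hφ : Phi φ) (hφex : gam φ < ⊤) :
    ∀ x : ℝ, 0 ≤ x → φ (1 + x) ≤ (gam φ).toReal * (φ 1 + φ x) := by
  intro x hx
  have hden : 0 < φ 1 + φ x :=
    add_pos_of_pos_of_nonneg (phi_one_pos hφ) (phi_nonneg hφ x hx)
  have h1 : ENNReal.ofReal (φ (1 + x) / (φ 1 + φ x)) ≤ gam φ :=
    le_iSup (fun y : Ici (0:ℝ) => ENNReal.ofReal (φ (1 + y) / (φ 1 + φ y))) ⟨x, hx⟩
  have h2 : φ (1 + x) / (φ 1 + φ x) ≤ (gam φ).toReal :=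
    (ENNReal.ofReal_le_iff_le_toReal hφex.ne).mp h1
  calc φ (1 + x) = φ (1 + x) / (φ 1 + φ x) * (φ 1 + φ x) := by
        field_simp
    _ ≤ (gam φ).toReal * (φ 1 + φ x) :=
        mul_le_mul_of_nonneg_right h2 hden.le

/-- If `φ, ψ ∈ Φ_ex`, then the pointwise product `φψ ∈ Φ_ex` with
`γ_{φψ} ≤ 2 γ_φ γ_ψ`. -/
theorem stmt_4 (φ ψ : ℝ → ℝ) (hφ : Phi φ) (hψ : Phi ψ)
    (hφex : gam φ < ⊤) (hψex : gam ψ < ⊤) :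
    Phi (fun x => φ x * ψ x) ∧
      gam (fun x => φ x * ψ x) ≤ 2 * gam φ * gam ψ := by
  have hφ0 := phi_nonneg hφ
  have hψ0 := phi_nonneg hψ
  have hφm := hφ.2.1
  have hψm := hψ.2.1
  -- strict monotonicity of the product
  have hmono : StrictMonoOn (fun x => φ x * ψ x) (Ici (0:ℝ)) := by
    intro a ha b hb hab
    have hψb : 0 < ψ b := by
      have : ψ 0 < ψ b := hψm self_mem_Ici hb (lt_of_le_of_lt ha hab)
      rwa [hψ.2.2.2] at this
    have h1 : φ a * ψ a ≤ φ a * ψ b :=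
      mul_le_mul_of_nonneg_left (hψm ha hb hab).le (hφ0 a ha)
    have h2 : φ a * ψ b < φ b * ψ b :=
      mul_lt_mul_of_pos_right (hφm ha hb hab) hψb
    exact lt_of_le_of_lt h1 h2
  -- convexity of the product
  have hconv : ConvexOn ℝ (Ici (0:ℝ)) (fun x => φ x * ψ x) := by
    have : ConvexOn ℝ (Ici (0:ℝ)) (φ * ψ) := by
      refine hφ.1.mul hψ.1 (fun x hx => hφ0 x hx) (fun x hx => hψ0 x hx) ?_
      intro i hi j hj hij
      rcases le_total i j with h | h
      · exact hφm.monotoneOn hi hj h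
      · exact absurd (hψm.monotoneOn hj hi h) (not_le.mpr hij)
    exact this
  -- continuity of the product
  have hcont : ContinuousOn (fun x => φ x * ψ x) (Ici (0:ℝ)) :=
    (phi_continuousOn hφ).mul (phi_continuousOn hψ)
  have hzero : φ 0 * ψ 0 = 0 := by rw [hφ.2.2.2, hψ.2.2.2, mul_zero]
  -- bijectivity
  have hbij : Set.BijOn (fun x => φ x * ψ x) (Ici (0:ℝ)) (Ici (0:ℝ)) := by
    refine ⟨fun x hx => mul_nonneg (hφ0 x hx) (hψ0 x hx), hmono.injOn, ?_⟩
    intro y hy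
    obtain ⟨a, ha, hay⟩ := hφ.2.2.1.surjOn hy
    obtain ⟨b, hb, hb1⟩ := hψ.2.2.1.surjOn (le_refl (0:ℝ) |>.trans zero_le_one : (1:ℝ) ∈ Ici 0)
    set c := max a b with hc
    have hca : a ≤ c := le_max_left a b
    have hcb : b ≤ c := le_max_right a b
    have hc0 : (0:ℝ) ≤ c := le_trans ha hca
    have hφc : y ≤ φ c := hay ▸ hφm.monotoneOn ha hc0 hca
    have hψc : 1 ≤ ψ c := hb1 ▸ hψm.monotoneOn hb hc0 hcb
    have hyc : y ≤ φ c * ψ c := by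
      calc y = y * 1 := (mul_one y).symm
        _ ≤ φ c * ψ c := mul_le_mul hφc hψc zero_le_one (le_trans hy hφc)
    have := intermediate_value_Icc hc0 (hcont.mono (Icc_subset_Ici_self))
    have hyIcc : y ∈ Icc (φ 0 * ψ 0) (φ c * ψ c) := by
      rw [hzero]; exact ⟨hy, hyc⟩
    obtain ⟨x, hxIcc, hxy⟩ := this hyIcc
    exact ⟨x, hxIcc.1, hxy⟩
  refine ⟨⟨hconv, hmono, hbij, hzero⟩, ?_⟩
  -- the γ bound
  set Gφ := (gam φ).toReal with hGφ
  set Gψ := (gam ψ).toReal with hGψ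
  have hGφ0 : 0 ≤ Gφ := ENNReal.toReal_nonneg
  have hGψ0 : 0 ≤ Gψ := ENNReal.toReal_nonneg
  have keyφ := gam_key hφ hφex
  have keyψ := gam_key hψ hψex
  refine iSup_le ?_
  rintro ⟨x, hx⟩
  simp only
  have hx' : (0:ℝ) ≤ x := hx
  have hφ1 := phi_one_pos hφ
  have hψ1 := phi_one_pos hψ
  have hφx := hφ0 x hx
  have hψx := hψ0 x hx
  have h1x : (0:ℝ) ≤ 1 + x := by linarith [hx']
  have hnum0 : 0 ≤ φ (1 + x) := hφ0 _ h1x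
  have hnum0' : 0 ≤ ψ (1 + x) := hψ0 _ h1x
  have hcross : 0 ≤ (φ 1 - φ x) * (ψ 1 - ψ x) := by
    rcases le_total x 1 with h | h
    · nlinarith [hφm.monotoneOn hx (by norm_num : (1:ℝ) ∈ Ici 0) h,
        hψm.monotoneOn hx (by norm_num : (1:ℝ) ∈ Ici 0) h]
    · nlinarith [hφm.monotoneOn (by norm_num : (1:ℝ) ∈ Ici 0) hx h,
        hψm.monotoneOn (by norm_num : (1:ℝ) ∈ Ici 0) hx h]
  have hmain : φ (1 + x) * ψ (1 + x) ≤ 2 * Gφ * Gψ * (φ 1 * ψ 1 + φ x * ψ x) := by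
    have h1 : φ (1 + x) * ψ (1 + x) ≤ (Gφ * (φ 1 + φ x)) * (Gψ * (ψ 1 + ψ x)) :=
      mul_le_mul (keyφ x hx) (keyψ x hx) hnum0' (mul_nonneg hGφ0 (by linarith))
    nlinarith [mul_nonneg hGφ0 hGψ0, mul_nonneg (mul_nonneg hGφ0 hGψ0) hcross]
  have hden : 0 < φ 1 * ψ 1 + φ x * ψ x :=
    add_pos_of_pos_of_nonneg (mul_pos hφ1 hψ1) (mul_nonneg hφx hψx)
  have hq : φ (1 + x) * ψ (1 + x) / (φ 1 * ψ 1 + φ x * ψ x) ≤ 2 * Gφ * Gψ :=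
    (div_le_iff₀ hden).mpr hmain
  calc ENNReal.ofReal (φ (1 + x) * ψ (1 + x) / (φ 1 * ψ 1 + φ x * ψ x))
      ≤ ENNReal.ofReal (2 * Gφ * Gψ) := ENNReal.ofReal_le_ofReal hq
    _ = 2 * gam φ * gam ψ := by
        rw [ENNReal.ofReal_mul (by positivity), ENNReal.ofReal_mul (by norm_num)]
        rw [hGφ, hGψ, ENNReal.ofReal_toReal hφex.ne, ENNReal.ofReal_toReal hψex.ne]
        norm_num
end

section
/- Let φ ∈ Φ and 0 < s < t. If γ_φ^{(s)} := sup_{x≥0} φ(x+s)/(φ(x)+φ(s)) is finite, then γ_φ^{(t)} is finite; indeed γ_φ^{(t)} ≤ (1 + γ_φ^{(s)})^{⌈t/s⌉}. -/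
/-!
Finiteness of `γ_φ^{(s)}` says `φ (x + s) ≤ γ (φ x + φ s)` for all `x ≥ 0`. Since `φ s ≤ φ t`,
each such step turns `φ y + φ t` into at most `(1 + γ) (φ y + φ t)`, so `k` steps give
`φ (x + k s) + φ t ≤ (1 + γ)^k (φ x + φ t)`. With `k = ⌈t / s⌉` we have `x + t ≤ x + k s`,
and monotonicity of `φ` bounds `φ (x + t)` by the same quantity.
-/

open Set Filter

/-- `γ_φ^{(t)} = sup_{x ≥ 0} φ(x+t)/(φ(x)+φ(t))`, valued in `[0,∞]`. -/
noncomputable def gamT (φ : ℝ → ℝ) (t : ℝ) : ENNReal :=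
  ⨆ x : Ici (0:ℝ), ENNReal.ofReal (φ (x + t) / (φ x + φ t))

namespace Phi

variable {φ : ℝ → ℝ}

lemma nonneg (hφ : Phi φ) {x : ℝ} (hx : 0 ≤ x) : 0 ≤ φ x :=
  hφ.2.2.1.mapsTo hx

lemma pos (hφ : Phi φ) {x : ℝ} (hx : 0 < x) : 0 < φ x := by
  simpa [hφ.2.2.2] using hφ.2.1 self_mem_Ici hx.le hx

lemma monotoneOn (hφ : Phi φ) : MonotoneOn φ (Ici 0) :=
  hφ.2.1.monotoneOn

end Phi

section gamT

variable {φ : ℝ → ℝ} {t x : ℝ}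

lemma ofReal_le_gamT (hx : 0 ≤ x) : ENNReal.ofReal (φ (x + t) / (φ x + φ t)) ≤ gamT φ t :=
  le_iSup (fun y : Ici (0 : ℝ) => ENNReal.ofReal (φ (y + t) / (φ y + φ t))) ⟨x, hx⟩

lemma gamT_le_ofReal {C : ℝ} (h : ∀ x, 0 ≤ x → φ (x + t) / (φ x + φ t) ≤ C) :
    gamT φ t ≤ ENNReal.ofReal C :=
  iSup_le fun x => ENNReal.ofReal_le_ofReal (h x x.2)

lemma apply_add_le_toReal_gamT_mul (hfin : gamT φ t ≠ ⊤) (hx : 0 ≤ x) (hd : 0 < φ x + φ t) :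
    φ (x + t) ≤ (gamT φ t).toReal * (φ x + φ t) :=
  (div_le_iff₀ hd).mp <| (ENNReal.ofReal_le_iff_le_toReal hfin).mp (ofReal_le_gamT hx)

end gamT

lemma add_le_one_add_pow_mul_of_le_mul_add {u : ℕ → ℝ} {G a b : ℝ} (hG : 0 ≤ G) (hab : a ≤ b)
    (hu : ∀ k, 0 ≤ u k) (hstep : ∀ k, u (k + 1) ≤ G * (u k + a)) (k : ℕ) :
    u k + b ≤ (1 + G) ^ k * (u 0 + b) := by
  induction k with
  | zero => simp
  | succ k ih =>
    calc u (k + 1) + b ≤ (1 + G) * (u k + b) := by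
          linarith [hstep k, hu k, mul_le_mul_of_nonneg_left hab hG]
      _ ≤ (1 + G) * ((1 + G) ^ k * (u 0 + b)) := by gcongr
      _ = (1 + G) ^ (k + 1) * (u 0 + b) := by ring

lemma Phi.apply_add_div_le {φ : ℝ → ℝ} (hφ : Phi φ) {s t x : ℝ} (hs : 0 < s) (hst : s < t)
    (hfin : gamT φ s ≠ ⊤) (hx : 0 ≤ x) :
    φ (x + t) / (φ x + φ t) ≤ (1 + (gamT φ s).toReal) ^ ⌈t / s⌉₊ := by
  set n := ⌈t / s⌉₊
  have hφt : 0 < φ t := hφ.pos (hs.trans hst)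
  have hxs : ∀ k : ℕ, 0 ≤ x + k * s := fun k => by positivity
  have hiter := add_le_one_add_pow_mul_of_le_mul_add (u := fun k : ℕ => φ (x + k * s))
    ENNReal.toReal_nonneg (hφ.monotoneOn hs.le (hs.trans hst).le hst.le)
    (fun k => hφ.nonneg (hxs k))
    (fun k => by
      simpa only [Nat.cast_succ, add_one_mul, ← add_assoc] using
        apply_add_le_toReal_gamT_mul hfin (hxs k)
          (add_pos_of_nonneg_of_pos (hφ.nonneg (hxs k)) (hφ.pos hs)))
    n
  simp only [Nat.cast_zero, zero_mul, add_zero] at hiter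
  have htn : t ≤ n * s := (div_le_iff₀ hs).mp (Nat.le_ceil _)
  have hmono : φ (x + t) ≤ φ (x + n * s) :=
    hφ.monotoneOn (by linarith : (0 : ℝ) ≤ x + t) (hxs n) (by linarith)
  rw [div_le_iff₀ (add_pos_of_nonneg_of_pos (hφ.nonneg hx) hφt)]
  linarith

/-- If `0 < s < t` and `γ_φ^{(s)} < ∞` then `γ_φ^{(t)} ≤ (1 + γ_φ^{(s)})^⌈t/s⌉ < ∞`. -/
theorem stmt_8 (φ : ℝ → ℝ) (hφ : Phi φ) (s t : ℝ) (hs : 0 < s) (hst : s < t)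
    (hfin : gamT φ s < ⊤) :
    gamT φ t < ⊤ ∧ gamT φ t ≤ (1 + gamT φ s) ^ (⌈t / s⌉₊ : ℕ) := by
  have hbound : gamT φ t ≤ ENNReal.ofReal ((1 + (gamT φ s).toReal) ^ ⌈t / s⌉₊) :=
    gamT_le_ofReal fun x hx => hφ.apply_add_div_le hs hst hfin.ne hx
  have hrhs : ENNReal.ofReal ((1 + (gamT φ s).toReal) ^ ⌈t / s⌉₊) = (1 + gamT φ s) ^ ⌈t / s⌉₊ := by
    rw [ENNReal.ofReal_pow (by positivity), ENNReal.ofReal_add zero_le_one ENNReal.toReal_nonneg,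
      ENNReal.ofReal_one, ENNReal.ofReal_toReal hfin.ne]
  exact ⟨hbound.trans_lt ENNReal.ofReal_lt_top, hrhs ▸ hbound⟩
end

section
/- For any φ ∈ Φ and t > 0, the condition sup_{x≥0} φ(x+t)/(φ(x)+φ(t)) < ∞ is equivalent to limsup_{x→∞} φ(x+t)/φ(x) < ∞. -/
open Set Filter

/-!
For `x ≥ t` we have `φ x ≤ φ x + φ t ≤ 2 φ x`, so the ratios `φ(x+t)/φ x` and
`φ(x+t)/(φ x + φ t)` agree up to a factor `2` for large `x`, while on a bounded range
`0 ≤ x ≤ X` the second ratio is at most `φ(X+t)/φ t`.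
-/

lemma div_le_two_mul_div_add {a b c : ℝ} (ha : 0 ≤ a) (hc : 0 < c) (hcb : c ≤ b) :
    a / b ≤ 2 * (a / (b + c)) := by
  rw [mul_div_assoc', div_le_div_iff₀ (hc.trans_le hcb) (by linarith)]
  nlinarith

lemma ofReal_div_le_gamT (φ : ℝ → ℝ) (t : ℝ) {x : ℝ} (hx : 0 ≤ x) :
    ENNReal.ofReal (φ (x + t) / (φ x + φ t)) ≤ gamT φ t :=
  le_iSup (fun y : Ici (0:ℝ) => ENNReal.ofReal (φ (y + t) / (φ y + φ t))) ⟨x, hx⟩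

section Monotone

variable {φ : ℝ → ℝ} {t : ℝ}

lemma limsup_ofReal_div_le_two_mul_gamT (hmon : MonotoneOn φ (Ici 0)) (ht : 0 ≤ t)
    (hφt : 0 < φ t) :
    limsup (fun x : ℝ => ENNReal.ofReal (φ (x + t) / φ x)) atTop ≤ 2 * gamT φ t := by
  refine limsup_le_of_le (by isBoundedDefault) ?_
  filter_upwards [eventually_ge_atTop t] with x hx
  have hx0 : 0 ≤ x := ht.trans hx
  have hφtx : φ t ≤ φ x := hmon ht hx0 hx
  have hnum : 0 ≤ φ (x + t) := hφt.le.trans (hmon ht (mem_Ici.mpr (by linarith)) (by linarith))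
  calc ENNReal.ofReal (φ (x + t) / φ x)
      ≤ ENNReal.ofReal (2 * (φ (x + t) / (φ x + φ t))) :=
        ENNReal.ofReal_le_ofReal (div_le_two_mul_div_add hnum hφt hφtx)
    _ = 2 * ENNReal.ofReal (φ (x + t) / (φ x + φ t)) := by
        rw [ENNReal.ofReal_mul zero_le_two, ENNReal.ofReal_ofNat]
    _ ≤ 2 * gamT φ t := by gcongr; exact ofReal_div_le_gamT φ t hx0

lemma gamT_le_max_of_ofReal_div_le (hmon : MonotoneOn φ (Ici 0)) (ht : 0 ≤ t)
    (hφt : 0 < φ t) (hφ0 : 0 ≤ φ 0) {X : ℝ} (htX : t ≤ X) {C : ENNReal}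
    (hC : ∀ x ≥ X, ENNReal.ofReal (φ (x + t) / φ x) ≤ C) :
    gamT φ t ≤ max C (ENNReal.ofReal (φ (X + t) / φ t)) := by
  refine iSup_le fun ⟨x, (hx : 0 ≤ x)⟩ => ?_
  have hnum : 0 ≤ φ (x + t) := hφt.le.trans (hmon ht (mem_Ici.mpr (by linarith)) (by linarith))
  have hφx : 0 ≤ φ x := hφ0.trans (hmon self_mem_Ici hx hx)
  rcases le_total x X with hxX | hXx
  · refine le_max_of_le_right (ENNReal.ofReal_le_ofReal ?_)
    refine div_le_div₀ (hnum.trans ?_) ?_ hφt (by linarith)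
    all_goals exact hmon (mem_Ici.mpr (by linarith)) (mem_Ici.mpr (by linarith)) (by linarith)
  · have hφtx : φ t ≤ φ x := hmon ht hx (htX.trans hXx)
    refine le_max_of_le_left ((ENNReal.ofReal_le_ofReal ?_).trans (hC x hXx))
    exact div_le_div_of_nonneg_left hnum (hφt.trans_le hφtx) (by linarith)

lemma gamT_lt_top_of_limsup_lt_top (hmon : MonotoneOn φ (Ici 0)) (ht : 0 ≤ t)
    (hφt : 0 < φ t) (hφ0 : 0 ≤ φ 0)
    (hL : limsup (fun x : ℝ => ENNReal.ofReal (φ (x + t) / φ x)) atTop < ⊤) :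
    gamT φ t < ⊤ := by
  obtain ⟨X, hX⟩ := eventually_atTop.mp
    (eventually_lt_of_limsup_lt (ENNReal.lt_add_right hL.ne one_ne_zero))
  have hbound := gamT_le_max_of_ofReal_div_le hmon ht hφt hφ0 (le_max_right X t)
    fun x hx => (hX x (le_of_max_le_left hx)).le
  exact hbound.trans_lt (max_lt (ENNReal.add_lt_top.mpr ⟨hL, ENNReal.one_lt_top⟩)
    ENNReal.ofReal_lt_top)

end Monotone

/-- For `φ ∈ Φ` and `t > 0`: `γ_φ^{(t)} < ∞` iff `limsup_{x→∞} φ(x+t)/φ(x) < ∞`. -/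
theorem stmt_9 (φ : ℝ → ℝ) (hφ : Phi φ) (t : ℝ) (ht : 0 < t) :
    gamT φ t < ⊤ ↔
      Filter.limsup (fun x : ℝ => ENNReal.ofReal (φ (x + t) / φ x)) Filter.atTop < ⊤ := by
  obtain ⟨-, hstrict, -, h0⟩ := hφ
  have hmon := hstrict.monotoneOn
  have hφt : 0 < φ t := h0 ▸ hstrict self_mem_Ici ht.le ht
  exact ⟨fun hγ => (limsup_ofReal_div_le_two_mul_gamT hmon ht.le hφt).trans_lt
      (ENNReal.mul_lt_top ENNReal.ofNat_lt_top hγ),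
    gamT_lt_top_of_limsup_lt_top hmon ht.le hφt h0.ge⟩
end

section
/- Let (X, ρ) be a metric space, μ a Borel probability measure, and φ ∈ Φ_ex such that F^φ_μ is finite. Then any two points y, z in the set of minimizers of F^φ_μ satisfy 2·φ(ρ(y,z)/2) ≤ 2·inf_{x∈X} F^φ_μ(x); hence the diameter of the φ-mean set is at most 2·φ^{-1}(inf_x F^φ_μ(x)). -/
open Set Filter

/-- For `φ ∈ Φ_ex` with finite φ-loss `F`, any two minimizers `y, z` of `F`
satisfy `2 φ(ρ(y,z)/2) ≤ 2 inf_x F(x)`; hence the diameter of the φ-mean set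
is at most `2 φ⁻¹(inf_x F(x))`. -/
theorem stmt_17 {X : Type*} [MetricSpace X] [Nonempty X]
    [MeasurableSpace X] [BorelSpace X]
    (μ : MeasureTheory.Measure X) [MeasureTheory.IsProbabilityMeasure μ]
    (φ : ℝ → ℝ) (hφ : Phi φ) (hex : gam φ < ⊤)
    (hint : ∀ x : X, MeasureTheory.Integrable (fun y => φ (dist x y)) μ)
    (F : X → ℝ) (hF : ∀ x, F x = ∫ y, φ (dist x y) ∂μ)
    (M : Set X) (hM : M = {x : X | ∀ z : X, F x ≤ F z}) :
    (∀ y ∈ M, ∀ z ∈ M, 2 * φ (dist y z / 2) ≤ 2 * ⨅ x : X, F x) ∧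
    (∀ r : ℝ, 0 ≤ r → φ r = ⨅ x : X, F x → Metric.diam M ≤ 2 * r) := by
  subst hM
  have key : ∀ y ∈ {x : X | ∀ z : X, F x ≤ F z}, ∀ z ∈ {x : X | ∀ z : X, F x ≤ F z},
      φ (dist y z / 2) ≤ ⨅ x : X, F x := by
    intro y hy z hz
    have hinf : (⨅ x : X, F x) = F y := by
      refine le_antisymm (ciInf_le ⟨F y, ?_⟩ y) (le_ciInf hy)
      rintro _ ⟨w, rfl⟩; exact hy w
    have hpt : ∀ w : X, φ (dist y z / 2) ≤ (φ (dist y w) + φ (dist z w)) / 2 := by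
      intro w
      have h1 : φ (dist y z / 2) ≤ φ ((dist y w + dist z w) / 2) := by
        refine hφ.2.1.monotoneOn ?_ ?_ ?_
        · exact mem_Ici.2 (div_nonneg dist_nonneg (by norm_num))
        · exact mem_Ici.2 (div_nonneg (add_nonneg dist_nonneg dist_nonneg) (by norm_num))
        · have := dist_triangle y w z
          rw [dist_comm w z] at this
          linarith
      have h2 : φ ((dist y w + dist z w) / 2) ≤ (φ (dist y w) + φ (dist z w)) / 2 := by
        have := hφ.1.2 (mem_Ici.2 (dist_nonneg : (0:ℝ) ≤ dist y w))
          (mem_Ici.2 (dist_nonneg : (0:ℝ) ≤ dist z w))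
          (by norm_num : (0:ℝ) ≤ 1/2) (by norm_num : (0:ℝ) ≤ 1/2) (by norm_num)
        simp only [smul_eq_mul] at this
        calc φ ((dist y w + dist z w) / 2)
            = φ (1/2 * dist y w + 1/2 * dist z w) := by ring_nf
          _ ≤ 1/2 * φ (dist y w) + 1/2 * φ (dist z w) := this
          _ = (φ (dist y w) + φ (dist z w)) / 2 := by ring
      exact h1.trans h2
    have hintg : MeasureTheory.Integrable
        (fun w => (φ (dist y w) + φ (dist z w)) / 2) μ :=
      ((hint y).add (hint z)).div_const 2
    have hmono : φ (dist y z / 2) ≤ ∫ w, (φ (dist y w) + φ (dist z w)) / 2 ∂μ := by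
      have := MeasureTheory.integral_mono (MeasureTheory.integrable_const _) hintg hpt
      simpa using this
    have heq : (∫ w, (φ (dist y w) + φ (dist z w)) / 2 ∂μ) = (F y + F z) / 2 := by
      rw [MeasureTheory.integral_div, MeasureTheory.integral_add (hint y) (hint z),
        hF y, hF z]
    have hFz : F z = F y := le_antisymm (hz y) (hy z)
    rw [hinf]
    rw [heq, hFz] at hmono
    linarith
  constructor
  · intro y hy z hz
    have := key y hy z hz
    linarith
  · intro r hr hφr
    refine Metric.diam_le_of_forall_dist_le (by linarith) ?_
    intro y hy z hz
    have h := key y hy z hz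
    rw [← hφr] at h
    by_contra hc
    push_neg at hc
    have : φ r < φ (dist y z / 2) :=
      hφ.2.1 (mem_Ici.2 hr) (mem_Ici.2 (div_nonneg dist_nonneg (by norm_num)))
        (by linarith)
    linarith
end
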